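/- For every integer κ ≥ 1, μ(H_q(κ)) = μ(Q^{κ−1}) − μ(Q^κ). -/
import Mathlib

open Set MeasureTheory

/-- `U⁰ = B` and `U^{κ+1} = U^κ \ (U^κ ∩ ⋂_{i=1}^q T^{−i}((U^κ)ᶜ))`. -/
def Uset {Ω : Type*} (T : Ω → Ω) (B : Set Ω) (q : ℕ) : ℕ → Set Ω
  | 0 => B
  | κ + 1 =>
      Uset T B q κ \
        (Uset T B q κ ∩ ⋂ i ∈ Finset.Icc 1 q, T^[i] ⁻¹' (Uset T B q κ)ᶜ)

/-- `Q^κ = U^κ ∩ ⋂_{i=1}^q T^{−i}((U^κ)ᶜ)`. -/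
def Qset {Ω : Type*} (T : Ω → Ω) (B : Set Ω) (q : ℕ) (κ : ℕ) : Set Ω :=
  Uset T B q κ ∩ ⋂ i ∈ Finset.Icc 1 q, T^[i] ⁻¹' (Uset T B q κ)ᶜ

/-- `U^∞ = ⋂_{κ ≥ 0} U^κ`. -/
def Uinf {Ω : Type*} (T : Ω → Ω) (B : Set Ω) (q : ℕ) : Set Ω :=
  ⋂ κ, Uset T B q κ

/-- `W_m = ⋂_{i=0}^{m-1} T^{−i}(Bᶜ)`. -/
def Wset {Ω : Type*} (T : Ω → Ω) (B : Set Ω) (m : ℕ) : Set Ω :=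
  ⋂ i ∈ Finset.range m, T^[i] ⁻¹' Bᶜ

/-- `H_q(0) = W_q \ W_{q+1}` and, for `κ ≥ 1`,
`H_q(κ) = T^{−q}(Q^{κ−1}) \ ⋃_{i=0}^{q−1} T^{−i}(Q^κ)`. -/
def Hset {Ω : Type*} (T : Ω → Ω) (B : Set Ω) (q : ℕ) : ℕ → Set Ω
  | 0 => Wset T B q \ Wset T B (q + 1)
  | κ + 1 =>
      T^[q] ⁻¹' Qset T B q κ \ ⋃ i ∈ Finset.range q, T^[i] ⁻¹' Qset T B q (κ + 1)

section Aux

variable {Ω : Type*} {T : Ω → Ω} {B : Set Ω} {q : ℕ}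

lemma measurable_Uset [MeasurableSpace Ω] (hT : Measurable T) (hB : MeasurableSet B) :
    ∀ κ, MeasurableSet (Uset T B q κ)
  | 0 => hB
  | (κ + 1) => by
      have h := measurable_Uset hT hB κ
      exact h.diff (h.inter (Finset.measurableSet_biInter _
        fun i _ => (hT.iterate i) h.compl))

lemma measurable_Qset [MeasurableSpace Ω] (hT : Measurable T) (hB : MeasurableSet B)
    (κ : ℕ) : MeasurableSet (Qset T B q κ) :=
  (measurable_Uset hT hB κ).inter (Finset.measurableSet_biInter _
    fun i _ => (hT.iterate i) (measurable_Uset hT hB κ).compl)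

lemma mem_Qset_iff {x : Ω} {κ : ℕ} :
    x ∈ Qset T B q κ ↔ x ∈ Uset T B q κ ∧
      ∀ i, 1 ≤ i → i ≤ q → T^[i] x ∉ Uset T B q κ := by
  simp [Qset, Set.mem_iInter, and_imp]

lemma Uset_succ (κ : ℕ) : Uset T B q (κ + 1) = Uset T B q κ \ Qset T B q κ := rfl

/-- preimages of `Q^κ` at times at distance `≤ q` are disjoint. -/
lemma Qset_preimage_disj {κ i j : ℕ} (hij : i < j) (hjq : j ≤ i + q) (x : Ω)
    (hi : T^[i] x ∈ Qset T B q κ) (hj : T^[j] x ∈ Qset T B q κ) : False := by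
  have h1 : T^[j - i] (T^[i] x) ∉ Uset T B q κ :=
    (mem_Qset_iff.mp hi).2 (j - i) (by omega) (by omega)
  have h2 : T^[j] x = T^[j - i] (T^[i] x) := by
    rw [← Function.iterate_add_apply, Nat.sub_add_cancel hij.le]
  exact h1 (h2 ▸ (mem_Qset_iff.mp hj).1)

lemma Qset_cover (_hq : 1 ≤ q) (k : ℕ) :
    ∀ x ∈ Qset T B q (k + 1), ∃ m, 1 ≤ m ∧ m ≤ q ∧ T^[m] x ∈ Qset T B q k := by
  intro x hx
  obtain ⟨hU, hni⟩ := mem_Qset_iff.mp hx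
  rw [Uset_succ] at hU
  have hUk : x ∈ Uset T B q k := hU.1
  have hnQ : x ∉ Qset T B q k := hU.2
  have : ∃ m, 1 ≤ m ∧ m ≤ q ∧ T^[m] x ∈ Uset T B q k := by
    by_contra h
    push_neg at h
    exact hnQ (mem_Qset_iff.mpr ⟨hUk, fun i h1 h2 => h i h1 h2⟩)
  obtain ⟨m, h1, h2, hm⟩ := this
  refine ⟨m, h1, h2, ?_⟩
  have h3 : T^[m] x ∉ Uset T B q (k + 1) := hni m h1 h2
  rw [Uset_succ] at h3
  by_contra hc
  exact h3 ⟨hm, hc⟩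

end Aux

theorem measure_Hset_eq_sub {Ω : Type*} [MeasurableSpace Ω] (μ : Measure Ω)
    [IsProbabilityMeasure μ] (T : Ω → Ω) (hT : Measurable T) (B : Set Ω)
    (hB : MeasurableSet B)
    (hpres : ∀ E : Set Ω, MeasurableSet E → μ (T ⁻¹' E) = μ E)
    (q : ℕ) (hq : 1 ≤ q) (κ : ℕ) (hκ : 1 ≤ κ) :
    (μ (Hset T B q κ)).toReal
      = (μ (Qset T B q (κ - 1))).toReal - (μ (Qset T B q κ)).toReal := by
  obtain ⟨k, rfl⟩ : ∃ k, κ = k + 1 := ⟨κ - 1, (Nat.succ_pred_eq_of_pos hκ).symm⟩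
  have hκ1 : k + 1 - 1 = k := rfl
  rw [hκ1]
  have hQm : ∀ κ, MeasurableSet (Qset T B q κ) := measurable_Qset hT hB
  -- iterated measure preservation
  have hpres_iter : ∀ n (E : Set Ω), MeasurableSet E → μ (T^[n] ⁻¹' E) = μ E := by
    intro n
    induction n with
    | zero => intro E _; simp
    | succ n ih =>
      intro E hE
      rw [Function.iterate_succ, Set.preimage_comp, hpres _ ((hT.iterate n) hE), ih E hE]
  set A : Set Ω := T^[q] ⁻¹' Qset T B q k with hA
  set C : Set Ω := ⋃ i ∈ Finset.range q, T^[i] ⁻¹' Qset T B q (k + 1) with hC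
  have hH : Hset T B q (k + 1) = A \ C := rfl
  have hCm : MeasurableSet C :=
    Finset.measurableSet_biUnion _ fun i _ => (hT.iterate i) (hQm (k + 1))
  have hAm : MeasurableSet A := (hT.iterate q) (hQm k)
  -- μ A = μ Q^k
  have hμA : μ A = μ (Qset T B q k) := hpres_iter q _ (hQm k)
  -- μ (A ∩ C) = μ Q^{k+1}
  have hμAC : μ (A ∩ C) = μ (Qset T B q (k + 1)) := by
    have hACun : A ∩ C = ⋃ i ∈ Finset.range q, (A ∩ T^[i] ⁻¹' Qset T B q (k + 1)) := by
      rw [hC, Set.inter_iUnion₂]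
    rw [hACun]
    rw [measure_biUnion_finset ?_ (fun i _ => hAm.inter ((hT.iterate i) (hQm (k + 1))))]
    · -- each term: μ (A ∩ T^{-i} Q^{k+1}) = μ (T^{-(q-i)} Q^k ∩ Q^{k+1})
      have hterm : ∀ i ∈ Finset.range q,
          μ (A ∩ T^[i] ⁻¹' Qset T B q (k + 1))
            = μ (T^[q - i] ⁻¹' Qset T B q k ∩ Qset T B q (k + 1)) := by
        intro i hi
        rw [Finset.mem_range] at hi
        have hqi : q = (q - i) + i := by omega
        have hAeq : A = T^[i] ⁻¹' (T^[q - i] ⁻¹' Qset T B q k) := by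
          rw [hA, ← Set.preimage_comp, ← Function.iterate_add, Nat.sub_add_cancel hi.le]
        rw [hAeq, ← Set.preimage_inter,
          hpres_iter i _ (((hT.iterate (q - i)) (hQm k)).inter (hQm (k + 1)))]
      rw [Finset.sum_congr rfl hterm]
      -- reindex i ↦ q - i : range q → Icc 1 q
      rw [show (∑ i ∈ Finset.range q,
            μ (T^[q - i] ⁻¹' Qset T B q k ∩ Qset T B q (k + 1)))
          = ∑ m ∈ Finset.Icc 1 q,
            μ (T^[m] ⁻¹' Qset T B q k ∩ Qset T B q (k + 1)) from
        Finset.sum_nbij' (fun i => q - i) (fun m => q - m)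
          (by intro i hi; simp at hi ⊢; omega)
          (by intro m hm; simp at hm ⊢; omega)
          (by intro i hi; simp at hi ⊢; omega)
          (by intro m hm; simp at hm ⊢; omega)
          (fun i hi => rfl)]
      -- the sum is the measure of a disjoint union equal to Q^{k+1}
      rw [← measure_biUnion_finset ?_ (fun m _ => ((hT.iterate m) (hQm k)).inter (hQm (k + 1)))]
      · congr 1
        apply Set.Subset.antisymm
        · intro x hx
          simp only [Finset.mem_coe, Set.mem_iUnion, exists_prop] at hx
          obtain ⟨m, _, _, hx2⟩ := hx
          exact hx2
        · intro x hx
          obtain ⟨m, h1, h2, hm⟩ := Qset_cover hq k x hx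
          exact Set.mem_biUnion (Finset.mem_Icc.mpr ⟨h1, h2⟩) ⟨hm, hx⟩
      · intro m hm m' hm' hne
        simp only [Finset.coe_Icc, Set.mem_Icc] at hm hm'
        refine Set.disjoint_left.mpr fun x hx hx' => ?_
        rcases lt_or_gt_of_ne hne with h | h
        · exact Qset_preimage_disj h (by omega) x hx.1 hx'.1
        · exact Qset_preimage_disj h (by omega) x hx'.1 hx.1
    · intro i hi j hj hne
      simp only [Finset.coe_range, Set.mem_Iio] at hi hj
      refine Set.disjoint_left.mpr fun x hx hx' => ?_
      rcases lt_or_gt_of_ne hne with h | h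
      · exact Qset_preimage_disj h (by omega) x hx.2 hx'.2
      · exact Qset_preimage_disj h (by omega) x hx'.2 hx.2
  -- combine
  have hkey : μ (A ∩ C) + μ (A \ C) = μ A := measure_inter_add_diff A hCm
  rw [hμA, hμAC] at hkey
  rw [hH]
  have h1 : μ (Qset T B q (k + 1)) ≠ ⊤ := measure_ne_top μ _
  have h2 : μ (A \ C) ≠ ⊤ := measure_ne_top μ _
  have := congrArg ENNReal.toReal hkey
  rw [ENNReal.toReal_add h1 h2] at this
  linarith
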